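/- Let d ≥ 1 and let μ be a positively associated probability measure on {0,1}^{ℤ^d}. Suppose there are constants c₀ > 0 and C₀ < ∞ such that for every z ∈ ℤ^d, every integer r ≥ 1 and all x, y ∈ B_r(z), μ({ω : x is connected to y by an ω-open path inside B_{2r}(z)}) ≥ c₀·r^{−C₀}. Then there exists C₁ < ∞, depending only on d, c₀ and C₀, such that for every integer r ≥ 2 and all x, y ∈ B_r, μ({ω : x is connected to y by an ω-open path inside B_r}) ≥ exp(−C₁ (log r)²). -/

import Mathlib

open MeasureTheory

/-- Nearest-neighbor adjacency on `ℤ^d`: Euclidean distance one. -/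
def nnAdj {d : ℕ} (x y : Fin d → ℤ) : Prop := ∑ i, (x i - y i) ^ 2 = 1

/-- The box `B_r(z) = z + ([-r,r] ∩ ℤ)^d`. -/
def latBoxAt {d : ℕ} (z : Fin d → ℤ) (r : ℕ) : Set (Fin d → ℤ) :=
  {x | ∀ i, |x i - z i| ≤ (r : ℤ)}

/-- The set of `ω`-open sites. -/
def openSites {d : ℕ} (ω : (Fin d → ℤ) → Bool) : Set (Fin d → ℤ) := {x | ω x = true}

/-- `x` and `y` are joined by a nearest-neighbor path lying in `A`. -/
def LatJoined {d : ℕ} (A : Set (Fin d → ℤ)) (x y : Fin d → ℤ) : Prop :=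
  ∃ l : List (Fin d → ℤ), l.Chain' nnAdj ∧ l.head? = some x ∧ l.getLast? = some y ∧
    ∀ z ∈ l, z ∈ A

/-- The event that `x` is connected to `y` by an `ω`-open path inside `A`. -/
def connEvent {d : ℕ} (A : Set (Fin d → ℤ)) (x y : Fin d → ℤ) :
    Set ((Fin d → ℤ) → Bool) :=
  {ω | LatJoined (A ∩ openSites ω) x y}

/-- Positive association: `μ(E ∩ F) ≥ μ(E)μ(F)` for increasing events `E`, `F`. -/
def PosAssoc {d : ℕ} (μ : Measure ((Fin d → ℤ) → Bool)) : Prop :=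
  ∀ E F : Set ((Fin d → ℤ) → Bool), MeasurableSet E → MeasurableSet F →
    (∀ ω ω' : (Fin d → ℤ) → Bool, (∀ x, ω x ≤ ω' x) → ω ∈ E → ω' ∈ E) →
    (∀ ω ω' : (Fin d → ℤ) → Bool, (∀ x, ω x ≤ ω' x) → ω ∈ F → ω' ∈ F) →
    μ E * μ F ≤ μ (E ∩ F)

/-!
Points of `B_r` are joined to the origin by a chain of `O(d + log r)` short steps, each of
probability at least `ε = c₀ r^{-|C₀|}`, and positive association glues the steps, giving
`ε^{O(d + log r)} = exp(-O((log r)²))`. Starting from `x`, the chain clamps the coordinates of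
`x` one at a time into `B_{r-1}`, which costs only single open sites (each open with probability
`≥ c₀` by the hypothesis at scale one), and then clamps `x` into `B_{r - 2^k}` for
`k = 0, 1, …, log₂ r`: consecutive points are `2^k`-close and the box of radius `2^{k+1}` around
the later one stays inside `B_r`, so the hypothesis applies at scale `2^k`. The last point lies in
`B_{r/2}` and is joined to the origin at scale `r/2`.
-/

variable {d : ℕ}

theorem nnAdj.symm {x y : Fin d → ℤ} (h : nnAdj x y) : nnAdj y x := by
  unfold nnAdj at *; rw [← h]; congr 1; funext i; ring

namespace LatJoined

variable {A A' : Set (Fin d → ℤ)} {x y z : Fin d → ℤ}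

theorem mono (hA : A ⊆ A') (h : LatJoined A x y) : LatJoined A' x y :=
  let ⟨l, hc, hx, hy, hl⟩ := h
  ⟨l, hc, hx, hy, fun w hw => hA (hl w hw)⟩

theorem symm (h : LatJoined A x y) : LatJoined A y x := by
  obtain ⟨l, hc, hx, hy, hl⟩ := h
  refine ⟨l.reverse, ?_, by rwa [List.head?_reverse], by rwa [List.getLast?_reverse],
    fun w hw => hl w (List.mem_reverse.mp hw)⟩
  exact List.isChain_reverse.mpr (hc.imp fun _ _ => nnAdj.symm)

theorem trans (h : LatJoined A x y) (h' : LatJoined A y z) : LatJoined A x z := by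
  obtain ⟨l, hc, hx, hy, hl⟩ := h
  obtain ⟨m, hc', hy', hz, hm⟩ := h'
  obtain ⟨l', rfl⟩ := List.getLast?_eq_some_iff.mp hy
  obtain ⟨m', rfl⟩ := List.head?_eq_some_iff.mp hy'
  refine ⟨l' ++ [y] ++ m', hc.append_overlap hc' (List.cons_ne_nil _ _), ?_, ?_, ?_⟩
  · simpa [List.head?_append] using hx
  · simpa using hz
  · intro w hw
    rcases List.mem_append.mp hw with hw | hw
    · exact hl w hw
    · exact hm w (List.mem_cons_of_mem _ hw)

end LatJoined

section Events

variable {A A' B : Set (Fin d → ℤ)} {x y z : Fin d → ℤ}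

theorem connEvent_comm : connEvent A x y = connEvent A y x :=
  Set.ext fun _ => ⟨LatJoined.symm, LatJoined.symm⟩

theorem connEvent_mono (h : A ⊆ A') : connEvent A x y ⊆ connEvent A' x y :=
  fun _ => LatJoined.mono (Set.inter_subset_inter_left _ h)

theorem connEvent_subset_setOf_left : connEvent A x y ⊆ {ω | ω x = true} := by
  rintro ω ⟨l, -, hx, -, hl⟩
  exact (hl x (List.mem_of_mem_head? hx)).2

theorem inter_connEvent_self_subset_connEvent (hx : x ∈ B) (hy : y ∈ B)
    (hxy : x = y ∨ nnAdj x y) : connEvent A x x ∩ connEvent A' y y ⊆ connEvent B x y := by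
  rintro ω ⟨hωx, hωy⟩
  replace hωx := connEvent_subset_setOf_left hωx
  replace hωy := connEvent_subset_setOf_left hωy
  rcases hxy with rfl | hadj
  · exact ⟨[x], List.isChain_singleton _, rfl, rfl, by simpa using ⟨hx, hωx⟩⟩
  · refine ⟨[x, y], List.isChain_pair.mpr hadj, rfl, rfl, ?_⟩
    simpa using ⟨⟨hx, hωx⟩, hy, hωy⟩

theorem measurableSet_connEvent : MeasurableSet (connEvent A x y) := by
  have hunion : connEvent A x y = ⋃ l ∈ {l : List (Fin d → ℤ) | l.IsChain nnAdj ∧ l.head? = some x ∧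
      l.getLast? = some y ∧ ∀ w ∈ l, w ∈ A}, ⋂ w ∈ l, (fun ω => ω w) ⁻¹' {true} := by
    ext ω
    simp only [connEvent, LatJoined, openSites, Set.mem_iUnion, Set.mem_iInter,
      Set.mem_ofPred_eq, Set.mem_inter_iff, Set.mem_preimage, Set.mem_singleton_iff,
      forall_and, exists_prop, and_assoc]
    rfl
  rw [hunion]
  exact .biUnion (Set.to_countable _) fun l _ => .biInter (Set.to_countable _)
    fun w _ => measurable_pi_apply w (measurableSet_singleton true)

theorem mem_connEvent_of_le {ω ω' : (Fin d → ℤ) → Bool} (hle : ∀ w, ω w ≤ ω' w)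
    (h : ω ∈ connEvent A x y) : ω' ∈ connEvent A x y := by
  obtain ⟨l, hc, hx, hy, hl⟩ := h
  exact ⟨l, hc, hx, hy, fun w hw =>
    ⟨(hl w hw).1, Bool.eq_true_of_true_le ((hl w hw).2 ▸ hle w)⟩⟩

end Events

namespace PosAssoc

variable {μ : Measure ((Fin d → ℤ) → Bool)} {A B : Set (Fin d → ℤ)} {x y x' y' z : Fin d → ℤ}

theorem mul_le_measure_inter_connEvent (hpa : PosAssoc μ) :
    μ (connEvent A x y) * μ (connEvent B x' y') ≤ μ (connEvent A x y ∩ connEvent B x' y') :=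
  hpa _ _ measurableSet_connEvent measurableSet_connEvent (fun _ _ => mem_connEvent_of_le)
    (fun _ _ => mem_connEvent_of_le)

theorem mul_le_measure_connEvent_trans (hpa : PosAssoc μ) :
    μ (connEvent A x y) * μ (connEvent A y z) ≤ μ (connEvent A x z) :=
  hpa.mul_le_measure_inter_connEvent.trans
    (measure_mono fun _ h => LatJoined.trans h.1 h.2)

theorem mul_pow_le_measure_connEvent (hpa : PosAssoc μ) {f : ℕ → Fin d → ℤ} {ε : ENNReal} {n : ℕ}
    (hf : ∀ j < n, ε ≤ μ (connEvent A (f j) (f (j + 1)))) :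
    μ (connEvent A x (f 0)) * ε ^ n ≤ μ (connEvent A x (f n)) := by
  induction n with
  | zero => simp
  | succ n ih =>
    calc μ (connEvent A x (f 0)) * ε ^ (n + 1)
        = μ (connEvent A x (f 0)) * ε ^ n * ε := by rw [pow_succ, mul_assoc]
      _ ≤ μ (connEvent A x (f n)) * μ (connEvent A (f n) (f (n + 1))) :=
        mul_le_mul' (ih fun j hj => hf j (by omega)) (hf n n.lt_succ_self)
      _ ≤ μ (connEvent A x (f (n + 1))) := hpa.mul_le_measure_connEvent_trans

end PosAssoc

section Boxes

variable {x y z w : Fin d → ℤ} {s t t' : ℕ}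

theorem center_mem_latBoxAt : z ∈ latBoxAt z s := fun i => by simp

theorem latBoxAt_mono (h : s ≤ t) : latBoxAt z s ⊆ latBoxAt z t :=
  fun _ hx i => (hx i).trans (by exact_mod_cast h)

theorem latBoxAt_subset_latBoxAt (hz : z ∈ latBoxAt w t) : latBoxAt z s ⊆ latBoxAt w (t + s) :=
  fun x hx i => by
    have := abs_sub_le (x i) (z i) (w i)
    have := hx i
    have := hz i
    push_cast
    linarith

def clampBox (t : ℕ) (x : Fin d → ℤ) : Fin d → ℤ := fun i => max (-t) (min (t : ℤ) (x i))

theorem clampBox_mem_latBoxAt : clampBox t x ∈ latBoxAt 0 t := fun i => by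
  simp only [clampBox, Pi.zero_apply, sub_zero, abs_le]; omega

theorem clampBox_of_mem (hx : x ∈ latBoxAt 0 t) : clampBox t x = x := funext fun i => by
  have := abs_le.mp (hx i)
  simp only [clampBox, Pi.zero_apply, sub_zero] at *; omega

theorem clampBox_mem_latBoxAt_clampBox (h : t' ≤ t) :
    clampBox t x ∈ latBoxAt (clampBox t' x) (t - t') := fun i => by
  simp only [clampBox, abs_le]; push_cast [h]; omega

def stair (x y : Fin d → ℤ) (j : ℕ) : Fin d → ℤ := fun i => if (i : ℕ) < j then y i else x i

theorem stair_zero : stair x y 0 = x := funext fun i => by simp [stair]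

theorem stair_dim : stair x y d = y := funext fun i => by simp [stair]

theorem stair_mem_latBoxAt (hx : x ∈ latBoxAt z t) (hy : y ∈ latBoxAt z t) (j : ℕ) :
    stair x y j ∈ latBoxAt z t := fun i => by
  unfold stair; split_ifs
  exacts [hy i, hx i]

theorem stair_eq_or_nnAdj_succ (hxy : x ∈ latBoxAt y 1) (j : ℕ) :
    stair x y j = stair x y (j + 1) ∨ nnAdj (stair x y j) (stair x y (j + 1)) := by
  have hdiff : ∀ i : Fin d,
      stair x y j i - stair x y (j + 1) i = if (i : ℕ) = j then x i - y i else 0 := by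
    intro i; simp only [stair]; split_ifs <;> omega
  refine or_iff_not_imp_left.mpr fun hne => ?_
  obtain ⟨i₀, hi₀⟩ := Function.ne_iff.mp hne
  have hi₀j : (i₀ : ℕ) = j := by by_contra h; simp [← sub_eq_zero, hdiff, h] at hi₀
  have hx₀ : x i₀ - y i₀ ≠ 0 := by simpa [← sub_eq_zero, hdiff, hi₀j] using hi₀
  unfold nnAdj
  have hoff : ∀ i, i ≠ i₀ → (stair x y j i - stair x y (j + 1) i) ^ 2 = 0 := fun i hi => by
    have : (i : ℕ) ≠ j := fun h => hi (Fin.ext (h.trans hi₀j.symm))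
    simp [hdiff, this]
  rw [Finset.sum_eq_single i₀ (fun i _ hi => hoff i hi) (by simp), hdiff, if_pos hi₀j]
  have := abs_le.mp (hxy i₀)
  rcases (by omega : x i₀ - y i₀ = 1 ∨ x i₀ - y i₀ = -1) with h | h <;> rw [h] <;> norm_num

theorem clampBox_sub_two_pow_mem_latBoxAt (r k : ℕ) :
    clampBox (r - 2 ^ k) x ∈ latBoxAt (clampBox (r - 2 ^ (k + 1)) x) (2 ^ k) :=
  latBoxAt_mono (by rw [pow_succ]; omega)
    (clampBox_mem_latBoxAt_clampBox
      (Nat.sub_le_sub_left (Nat.pow_le_pow_right two_pos k.le_succ) r))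

theorem latBoxAt_clampBox_sub_two_pow_subset {r k : ℕ} (h : 2 ^ (k + 1) ≤ r) :
    latBoxAt (clampBox (r - 2 ^ (k + 1)) x) (2 * 2 ^ k) ⊆ latBoxAt 0 r :=
  (latBoxAt_subset_latBoxAt clampBox_mem_latBoxAt).trans
    (latBoxAt_mono (by rw [pow_succ] at h; omega))

end Boxes

theorem Real.rpow_neg_abs_le_rpow_neg {s r : ℝ} (C : ℝ) (hs : 1 ≤ s) (hsr : s ≤ r) :
    r ^ (-|C|) ≤ s ^ (-C) :=
  (Real.rpow_le_rpow_of_nonpos (by linarith) hsr (neg_nonpos.mpr (abs_nonneg C))).trans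
    (Real.rpow_le_rpow_of_exponent_le hs (neg_le_neg (le_abs_self C)))

theorem Real.exp_neg_mul_log_le_mul_rpow_neg_abs {c C r : ℝ} (hc : 0 < c) (hr : 2 ≤ r) :
    Real.exp (-(|Real.log c| / Real.log 2 + |C|) * Real.log r) ≤ c * r ^ (-|C|) := by
  have hl2 : 0 < Real.log 2 := Real.log_pos one_lt_two
  have ht : 1 ≤ Real.log r / Real.log 2 := (one_le_div hl2).mpr (Real.log_le_log two_pos hr)
  rw [← Real.exp_log (by positivity : 0 < c * r ^ (-|C|)), Real.exp_le_exp,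
    Real.log_mul hc.ne' (by positivity), Real.log_rpow (by linarith)]
  have := neg_abs_le (Real.log c)
  have := le_mul_of_one_le_right (abs_nonneg (Real.log c)) ht
  have : -(|Real.log c| / Real.log 2 + |C|) * Real.log r =
      -(|Real.log c| * (Real.log r / Real.log 2)) - |C| * Real.log r := by ring
  linarith

theorem cast_two_mul_add_natLog_le {r : ℕ} (hr : 2 ≤ r) (d : ℕ) :
    ((2 * (2 * d + Nat.log 2 r + 3) : ℕ) : ℝ) ≤ (4 * d + 8) / Real.log 2 * Real.log r := by
  have hl2 : 0 < Real.log 2 := Real.log_pos one_lt_two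
  have ht : 1 ≤ Real.log r / Real.log 2 :=
    (one_le_div hl2).mpr (Real.log_le_log two_pos (by exact_mod_cast hr))
  have hK : (Nat.log 2 r : ℝ) ≤ Real.log r / Real.log 2 := by
    simpa [Real.logb] using Real.natLog_le_logb r 2
  rw [div_mul_eq_mul_div, mul_div_assoc]
  push_cast
  nlinarith

theorem ofReal_exp_neg_mul_log_sq_le_pow {c C : ℝ} (hc : 0 < c) {r : ℕ} (hr : 2 ≤ r) (d : ℕ) :
    ENNReal.ofReal (Real.exp (-((4 * d + 8) / Real.log 2 * (|Real.log c| / Real.log 2 + |C|)) *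
      Real.log r ^ 2)) ≤ ENNReal.ofReal (c * r ^ (-|C|)) ^ (2 * (2 * d + Nat.log 2 r + 3)) := by
  set M := |Real.log c| / Real.log 2 + |C|
  set N := 2 * (2 * d + Nat.log 2 r + 3)
  have hML : 0 ≤ M * Real.log r :=
    mul_nonneg (by positivity) (Real.log_nonneg (by exact_mod_cast (by omega : 1 ≤ r)))
  have hN := mul_le_mul_of_nonneg_right (cast_two_mul_add_natLog_le hr d) hML
  calc _ ≤ ENNReal.ofReal (Real.exp (-M * Real.log r) ^ N) := by
        refine ENNReal.ofReal_le_ofReal ?_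
        rw [← Real.exp_nat_mul, Real.exp_le_exp]
        linarith
    _ = ENNReal.ofReal (Real.exp (-M * Real.log r)) ^ N := ENNReal.ofReal_pow (Real.exp_pos _).le N
    _ ≤ _ := pow_le_pow_left' (ENNReal.ofReal_le_ofReal
        (Real.exp_neg_mul_log_le_mul_rpow_neg_abs hc (by exact_mod_cast hr))) N

def PolyTwoPointBound (μ : Measure ((Fin d → ℤ) → Bool)) (c₀ C₀ : ℝ) : Prop :=
  ∀ z : Fin d → ℤ, ∀ r : ℕ, 1 ≤ r →
    ∀ x y : Fin d → ℤ, x ∈ latBoxAt z r → y ∈ latBoxAt z r →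
      ENNReal.ofReal (c₀ * (r : ℝ) ^ (-C₀)) ≤ μ (connEvent (latBoxAt z (2 * r)) x y)

namespace PolyTwoPointBound

variable {μ : Measure ((Fin d → ℤ) → Bool)} {c₀ C₀ : ℝ} {B : Set (Fin d → ℤ)}
  {x y z : Fin d → ℤ}

theorem ofReal_le_measure_connEvent_self (hyp : PolyTwoPointBound μ c₀ C₀) (v : Fin d → ℤ) :
    ENNReal.ofReal c₀ ≤ μ (connEvent (latBoxAt v 2) v v) := by
  simpa using hyp v 1 le_rfl v v center_mem_latBoxAt center_mem_latBoxAt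

theorem ofReal_sq_le_measure_connEvent (hyp : PolyTwoPointBound μ c₀ C₀) (hpa : PosAssoc μ)
    (hx : x ∈ B) (hy : y ∈ B) (hxy : x = y ∨ nnAdj x y) :
    ENNReal.ofReal c₀ ^ 2 ≤ μ (connEvent B x y) :=
  calc ENNReal.ofReal c₀ ^ 2 = ENNReal.ofReal c₀ * ENNReal.ofReal c₀ := sq _
    _ ≤ μ (connEvent (latBoxAt x 2) x x) * μ (connEvent (latBoxAt y 2) y y) :=
      mul_le_mul' (hyp.ofReal_le_measure_connEvent_self x) (hyp.ofReal_le_measure_connEvent_self y)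
    _ ≤ μ (connEvent (latBoxAt x 2) x x ∩ connEvent (latBoxAt y 2) y y) :=
      hpa.mul_le_measure_inter_connEvent
    _ ≤ μ (connEvent B x y) := measure_mono (inter_connEvent_self_subset_connEvent hx hy hxy)

theorem ofReal_rpow_le_measure_connEvent (hyp : PolyTwoPointBound μ c₀ C₀) (hc₀ : 0 ≤ c₀)
    {s r : ℕ} (hs : 1 ≤ s) (hsr : s ≤ r) (hx : x ∈ latBoxAt z s) (hy : y ∈ latBoxAt z s)
    (hB : latBoxAt z (2 * s) ⊆ B) :
    ENNReal.ofReal (c₀ * (r : ℝ) ^ (-|C₀|)) ≤ μ (connEvent B x y) :=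
  (ENNReal.ofReal_le_ofReal (mul_le_mul_of_nonneg_left
    (Real.rpow_neg_abs_le_rpow_neg C₀ (by exact_mod_cast hs) (by exact_mod_cast hsr)) hc₀)).trans
    ((hyp z s hs x y hx hy).trans (measure_mono (connEvent_mono hB)))

theorem pow_le_measure_connEvent_zero (hyp : PolyTwoPointBound μ c₀ C₀) (hpa : PosAssoc μ)
    (hc₀ : 0 ≤ c₀) {r : ℕ} (hr : 2 ≤ r) (hx : x ∈ latBoxAt 0 r) :
    ENNReal.ofReal (c₀ * (r : ℝ) ^ (-|C₀|)) ^ (2 * d + Nat.log 2 r + 3) ≤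
      μ (connEvent (latBoxAt 0 r) x 0) := by
  set ε := ENNReal.ofReal (c₀ * (r : ℝ) ^ (-|C₀|))
  set B := latBoxAt (0 : Fin d → ℤ) r
  set K := Nat.log 2 r
  -- `p k ∈ B_{r - 2^k}`, and truncated subtraction makes `p k = 0` once `2^k ≥ r`.
  set p : ℕ → Fin d → ℤ := fun k => clampBox (r - 2 ^ k) x
  have hεc : ε ^ 2 ≤ ENNReal.ofReal c₀ ^ 2 := by
    refine pow_le_pow_left' (ENNReal.ofReal_le_ofReal ?_) 2
    simpa using mul_le_mul_of_nonneg_left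
      (Real.rpow_neg_abs_le_rpow_neg C₀ le_rfl (by exact_mod_cast (by omega : 1 ≤ r))) hc₀
  have hp₀ : p 0 ∈ B := latBoxAt_mono (by omega) clampBox_mem_latBoxAt
  have hxp₀ : x ∈ latBoxAt (p 0) 1 := by
    have := clampBox_mem_latBoxAt_clampBox (x := x) (Nat.sub_le r 1)
    rwa [clampBox_of_mem hx, Nat.sub_sub_self (by omega)] at this
  have hstart : ε ^ 2 ≤ μ (connEvent B x x) :=
    hεc.trans (hyp.ofReal_sq_le_measure_connEvent hpa hx hx (.inl rfl))
  have hstairs : μ (connEvent B x x) * (ε ^ 2) ^ d ≤ μ (connEvent B x (p 0)) := by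
    have := hpa.mul_pow_le_measure_connEvent (x := x) (n := d) fun j _ =>
      hεc.trans (hyp.ofReal_sq_le_measure_connEvent hpa (stair_mem_latBoxAt hx hp₀ j)
        (stair_mem_latBoxAt hx hp₀ (j + 1)) (stair_eq_or_nnAdj_succ hxp₀ j))
    rwa [stair_zero, stair_dim] at this
  have hdyadic : μ (connEvent B x (p 0)) * ε ^ K ≤ μ (connEvent B x (p K)) :=
    hpa.mul_pow_le_measure_connEvent fun k hk =>
      have hkr : 2 ^ (k + 1) ≤ r :=
        (Nat.pow_le_pow_right two_pos hk).trans (Nat.pow_log_le_self 2 (by omega))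
      hyp.ofReal_rpow_le_measure_connEvent hc₀ Nat.one_le_two_pow
        (le_trans (by rw [pow_succ]; omega) hkr) (clampBox_sub_two_pow_mem_latBoxAt r k)
        center_mem_latBoxAt (latBoxAt_clampBox_sub_two_pow_subset hkr)
  have hlast : ε ≤ μ (connEvent B (p K) 0) := by
    have hrK : r < 2 ^ K * 2 := pow_succ 2 K ▸ Nat.lt_pow_succ_log_self one_lt_two r
    exact hyp.ofReal_rpow_le_measure_connEvent hc₀ (by omega : 1 ≤ r / 2) (Nat.div_le_self r 2)
      (latBoxAt_mono (by omega) clampBox_mem_latBoxAt) center_mem_latBoxAt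
      (latBoxAt_mono (by omega))
  calc ε ^ (2 * d + K + 3) = ε ^ 2 * (ε ^ 2) ^ d * ε ^ K * ε := by ring
    _ ≤ μ (connEvent B x x) * (ε ^ 2) ^ d * ε ^ K * ε := by gcongr
    _ ≤ μ (connEvent B x (p 0)) * ε ^ K * ε := by gcongr
    _ ≤ μ (connEvent B x (p K)) * μ (connEvent B (p K) 0) := by gcongr
    _ ≤ μ (connEvent B x 0) := hpa.mul_le_measure_connEvent_trans

end PolyTwoPointBound

theorem two_point_quasi_polynomial_lower_bound_general (d : ℕ)
    (c₀ C₀ : ℝ) (hc₀ : 0 < c₀) :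
    ∃ C₁ : ℝ,
      ∀ μ : Measure ((Fin d → ℤ) → Bool), IsProbabilityMeasure μ → PosAssoc μ →
        (∀ z : Fin d → ℤ, ∀ r : ℕ, 1 ≤ r →
          ∀ x y : Fin d → ℤ, x ∈ latBoxAt z r → y ∈ latBoxAt z r →
            ENNReal.ofReal (c₀ * (r : ℝ) ^ (-C₀)) ≤ μ (connEvent (latBoxAt z (2 * r)) x y)) →
        ∀ r : ℕ, 2 ≤ r → ∀ x y : Fin d → ℤ, x ∈ latBoxAt 0 r → y ∈ latBoxAt 0 r →
          ENNReal.ofReal (Real.exp (-C₁ * Real.log r ^ 2)) ≤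
            μ (connEvent (latBoxAt 0 r) x y) := by
  refine ⟨(4 * d + 8) / Real.log 2 * (|Real.log c₀| / Real.log 2 + |C₀|), ?_⟩
  intro μ _ hpa hyp r hr x y hx hy
  have hx0 := PolyTwoPointBound.pow_le_measure_connEvent_zero hyp hpa hc₀.le hr hx
  have h0y := connEvent_comm (A := latBoxAt 0 r) (x := y) ▸
    PolyTwoPointBound.pow_le_measure_connEvent_zero hyp hpa hc₀.le hr hy
  calc _ ≤ ENNReal.ofReal (c₀ * (r : ℝ) ^ (-|C₀|)) ^ (2 * (2 * d + Nat.log 2 r + 3)) :=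
        ofReal_exp_neg_mul_log_sq_le_pow hc₀ hr d
    _ ≤ μ (connEvent (latBoxAt 0 r) x 0) * μ (connEvent (latBoxAt 0 r) 0 y) := by
        rw [two_mul, pow_add]; exact mul_le_mul' hx0 h0y
    _ ≤ μ (connEvent (latBoxAt 0 r) x y) := hpa.mul_le_measure_connEvent_trans

/-- polynomial two-point lower bounds at all centers and scales upgrade to a
`exp(−C₁(log r)²)` lower bound for connections inside `B_r` itself. -/
theorem two_point_quasi_polynomial_lower_bound (d : ℕ) (hd : 1 ≤ d)
    (c₀ C₀ : ℝ) (hc₀ : 0 < c₀) :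
    ∃ C₁ : ℝ,
      ∀ μ : Measure ((Fin d → ℤ) → Bool), IsProbabilityMeasure μ → PosAssoc μ →
        (∀ z : Fin d → ℤ, ∀ r : ℕ, 1 ≤ r →
          ∀ x y : Fin d → ℤ, x ∈ latBoxAt z r → y ∈ latBoxAt z r →
            ENNReal.ofReal (c₀ * (r : ℝ) ^ (-C₀)) ≤ μ (connEvent (latBoxAt z (2 * r)) x y)) →
        ∀ r : ℕ, 2 ≤ r → ∀ x y : Fin d → ℤ, x ∈ latBoxAt 0 r → y ∈ latBoxAt 0 r →
          ENNReal.ofReal (Real.exp (-C₁ * Real.log r ^ 2)) ≤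
            μ (connEvent (latBoxAt 0 r) x y) :=
  two_point_quasi_polynomial_lower_bound_general d c₀ C₀ hc₀
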